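/- Let (a_i)_{i≥1}, (b_i)_{i≥0}, (λ_i)_{i≥1}, (c_i)_{i≥1} be sequences of complex numbers satisfying the type R_II conditions, and assume that for all n, m ≥ 0 the family (wt(p))_{p∈Γ_{n,m}} is summable in ℂ. Suppose ℒ : W → ℂ is a ℂ-linear map such that ℒ(x^n) = Σ_{p∈Γ_n} wt(p) for all n ≥ 0, ℒ(Q_n(x)) = 0 for all n ≥ 1, ℒ(x·Q_{n+1}(x)) = 0 for all n ≥ 1, and ℒ(x·Q_1(x)) = Σ_{p∈Γ_{1,1}} wt(p). Then for all n, m ≥ 0, ℒ(x^n Q_m(x)) = Σ_{p∈Γ_{n,m}} wt(p). -/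

import Mathlib

open Polynomial

/-- Steps of an `R_II` path: up, horizontal, down, vertical-down, backward-down. -/
inductive RStep : Type
  | U | H | D | V | B
  deriving DecidableEq

/-- Displacement of each step. -/
def RStep.disp : RStep → ℤ × ℤ
  | .U => (1, 1)
  | .H => (1, 0)
  | .D => (1, -1)
  | .V => (0, -1)
  | .B => (-1, -1)

/-- End point of a lattice path starting at `start` with the given list of steps. -/
def endPt (start : ℤ × ℤ) : List RStep → ℤ × ℤ
  | [] => start
  | s :: l => endPt (start + s.disp) l

/-- All intermediate heights along the path (starting at height `h`) are nonnegative,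
so that the points of the path lie in `ℤ × ℤ≥0`. -/
def heightsNonneg (h : ℤ) : List RStep → Prop
  | [] => True
  | s :: l => 0 ≤ h + s.disp.2 ∧ heightsNonneg (h + s.disp.2) l

/-- `Gamma n r s` is the set of `R_II` paths from `(0, r)` to `(n, s)`. -/
def Gamma (n r s : ℕ) : Set (List RStep) :=
  {l | heightsNonneg (r : ℤ) l ∧ endPt (0, (r : ℤ)) l = ((n : ℤ), (s : ℤ))}

/-- The list of all points visited by a path. -/
def pathPoints (start : ℤ × ℤ) : List RStep → List (ℤ × ℤ)
  | [] => [start]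
  | s :: l => start :: pathPoints (start + s.disp) l

/-- `RGamma n r s` is the set of restricted `R_II` paths from `(0, r)` to `(n, s)`:
paths in `Gamma n r s` whose points have first coordinate `n` only at the final point. -/
def RGamma (n r s : ℕ) : Set (List RStep) :=
  {l | l ∈ Gamma n r s ∧ ∀ p ∈ (pathPoints (0, (r : ℤ)) l).dropLast, p.1 ≠ (n : ℤ)}

/-- Weight of a single step starting at height `h`:
`1` for `U`, `b_i` for `H`, `λ_i` for `D`, `a_i` for `V`, `c_i` for `B` starting at height `i`. -/
def stepWt {R : Type*} [CommRing R] (a b lam c : ℕ → R) (h : ℤ) : RStep → R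
  | .U => 1
  | .H => b h.toNat
  | .D => lam h.toNat
  | .V => a h.toNat
  | .B => c h.toNat

/-- Weight of a path starting at height `h`: the product of the weights of its steps. -/
def pathWt {R : Type*} [CommRing R] (a b lam c : ℕ → R) : ℤ → List RStep → R
  | _, [] => 1
  | h, s :: l => stepWt a b lam c h s * pathWt a b lam c (h + s.disp.2) l
/-- The polynomials `P_n` defined by `P_0 = 1`, `P_1 = x - b_0` and
`P_{n+1} = (x - b_n) P_n - (c_n x² + a_n x + λ_n) P_{n-1}` (so `P_{-1} = 0`). -/
noncomputable def Ppoly {R : Type*} [CommRing R] (a b lam c : ℕ → R) : ℕ → Polynomial R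
  | 0 => 1
  | 1 => X - C (b 0)
  | n + 2 =>
      (X - C (b (n + 1))) * Ppoly a b lam c (n + 1) -
        (C (c (n + 1)) * X ^ 2 + C (a (n + 1)) * X + C (lam (n + 1))) * Ppoly a b lam c n

/-- `d_m(x) = ∏_{i=1}^m (c_i x² + a_i x + λ_i)`, with `d_0 = 1`. -/
noncomputable def dpoly {R : Type*} [CommRing R] (a lam c : ℕ → R) (m : ℕ) : Polynomial R :=
  ∏ i ∈ Finset.range m, (C (c (i + 1)) * X ^ 2 + C (a (i + 1)) * X + C (lam (i + 1)))
/-- `Q_m = P_m / d_m` as an element of the field `RatFunc ℂ`. -/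
noncomputable def Qfun (a b lam c : ℕ → ℂ) (m : ℕ) : RatFunc ℂ :=
  algebraMap (Polynomial ℂ) (RatFunc ℂ) (Ppoly a b lam c m) /
    algebraMap (Polynomial ℂ) (RatFunc ℂ) (dpoly a lam c m)

/-- `W`, the ℂ-subspace of `RatFunc ℂ` spanned by `{x^n Q_m : n, m ≥ 0}`. -/
noncomputable def Wspace (a b lam c : ℕ → ℂ) : Submodule ℂ (RatFunc ℂ) :=
  Submodule.span ℂ {f | ∃ n m : ℕ, f = RatFunc.X ^ n * Qfun a b lam c m}

/-- `W'`, the ℂ-subspace of `RatFunc ℂ` spanned by `{x^n / d_m : n, m ≥ 0}`. -/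
noncomputable def W'space (a lam c : ℕ → ℂ) : Submodule ℂ (RatFunc ℂ) :=
  Submodule.span ℂ
    {f | ∃ n m : ℕ, f = RatFunc.X ^ n / algebraMap (Polynomial ℂ) (RatFunc ℂ) (dpoly a lam c m)}

/-- The type `R_II` conditions: for every `n ≥ 1`, `c_n ≠ 0` and `P_n(z) ≠ 0` for every
root `z` of `c_n x² + a_n x + λ_n`. -/
def RIIConds (a b lam c : ℕ → ℂ) : Prop :=
  ∀ n : ℕ, 1 ≤ n → c n ≠ 0 ∧
    ∀ z : ℂ, c n * z ^ 2 + a n * z + lam n = 0 →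
      Polynomial.eval z (Ppoly a b lam c n) ≠ 0

section Comb

lemma endPt_eq (l : List RStep) (p : ℤ × ℤ) :
    endPt p l = p + (l.map RStep.disp).sum := by
  induction l generalizing p with
  | nil => simp [endPt]
  | cons s l ih => simp [endPt, ih, add_assoc]

lemma heightsNonneg_concat (l : List RStep) (s : RStep) (h : ℤ) :
    heightsNonneg h (l ++ [s]) ↔
      heightsNonneg h l ∧ 0 ≤ h + ((l.map RStep.disp).sum).2 + s.disp.2 := by
  induction l generalizing h with
  | nil => simp [heightsNonneg]
  | cons t l ih =>
    show (0 ≤ h + t.disp.2 ∧ heightsNonneg (h + t.disp.2) (l ++ [s])) ↔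
      ((0 ≤ h + t.disp.2 ∧ heightsNonneg (h + t.disp.2) l) ∧ _)
    rw [ih, and_assoc]
    have harith : h + t.disp.2 + ((l.map RStep.disp).sum).2
        = h + (((t :: l).map RStep.disp).sum).2 := by
      simp [Prod.snd_add]; ring
    constructor
    · rintro ⟨h1, h2, h3⟩
      exact ⟨h1, h2, by rw [← harith]; exact h3⟩
    · rintro ⟨h1, h2, h3⟩
      exact ⟨h1, h2, by rw [harith]; exact h3⟩

lemma pathWt_concat {R : Type*} [CommRing R] (a b lam c : ℕ → R) (l : List RStep) (s : RStep)
    (h : ℤ) :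
    pathWt a b lam c h (l ++ [s]) =
      pathWt a b lam c h l * stepWt a b lam c (h + ((l.map RStep.disp).sum).2) s := by
  induction l generalizing h with
  | nil => simp [pathWt]
  | cons t l ih =>
    show stepWt a b lam c h t * pathWt a b lam c (h + t.disp.2) (l ++ [s]) = _
    rw [ih, ← mul_assoc]
    have harith : h + t.disp.2 + ((l.map RStep.disp).sum).2
        = h + (((t :: l).map RStep.disp).sum).2 := by
      simp [Prod.snd_add]; ring
    rw [harith]
    rfl

lemma endHt_nonneg (l : List RStep) (h : ℤ) (h0 : 0 ≤ h) (hl : heightsNonneg h l) :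
    0 ≤ h + ((l.map RStep.disp).sum).2 := by
  induction l generalizing h with
  | nil => simpa using h0
  | cons s l ih =>
    obtain ⟨h1, h2⟩ := hl
    have := ih _ h1 h2
    have harith : h + s.disp.2 + ((l.map RStep.disp).sum).2
        = h + (((s :: l).map RStep.disp).sum).2 := by
      simp [Prod.snd_add]; ring
    rw [← harith]
    exact this

lemma snd_le_fst (l : List RStep) (p : ℤ × ℤ) (hp : p.2 ≤ p.1) :
    (endPt p l).2 ≤ (endPt p l).1 := by
  induction l generalizing p with
  | nil => simpa [endPt]
  | cons s l ih =>
    apply ih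
    cases s <;> simp [RStep.disp, Prod.fst_add, Prod.snd_add] <;> omega

lemma gamma_empty {n m : ℕ} (h : n < m) : IsEmpty (Gamma n 0 m) := by
  constructor
  rintro ⟨l, hl, he⟩
  simp only [Nat.cast_zero] at he
  have h2 := snd_le_fst l (0, (0:ℤ)) le_rfl
  rw [he] at h2
  have : (m : ℤ) ≤ (n : ℤ) := h2
  omega

lemma mem_gamma_concat (l : List RStep) (s : RStep) (N m : ℕ) :
    l ++ [s] ∈ Gamma N 0 m ↔
      heightsNonneg 0 l ∧ endPt (0, 0) l = ((N : ℤ) - s.disp.1, (m : ℤ) - s.disp.2) := by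
  simp only [Gamma, Set.mem_setOf_eq, Nat.cast_zero, heightsNonneg_concat]
  rw [endPt_eq, endPt_eq]
  simp only [List.map_append, List.sum_append, List.map_cons, List.map_nil, List.sum_cons,
    List.sum_nil, add_zero, ← add_assoc]
  rw [Prod.ext_iff, Prod.ext_iff]
  simp only [Prod.fst_add, Prod.snd_add, Prod.fst_zero, Prod.snd_zero, zero_add]
  constructor
  · rintro ⟨⟨h1, h2⟩, h3, h4⟩
    exact ⟨h1, by omega, by omega⟩
  · rintro ⟨h1, h2, h3⟩
    exact ⟨⟨h1, by omega⟩, by omega, by omega⟩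

end Comb
section Mu

variable (a b lam c : ℕ → ℂ)

/-- Sum of weights over `Γ_{n,0,m}`. -/
noncomputable def mu (n m : ℕ) : ℂ := ∑' p : Gamma n 0 m, pathWt a b lam c 0 p.1

/-- Indicator-style function selecting paths in `Γ_{N,0,m}` ending with step `s`. -/
noncomputable def Fstep (N m : ℕ) (s : RStep) (l : List RStep) : ℂ :=
  if l.getLast? = some s then Set.indicator (Gamma N 0 m) (pathWt a b lam c 0) l else 0

lemma concat_mem_iff {s : RStep} {N m n' m' : ℕ}
    (hx : (n' : ℤ) = (N : ℤ) - s.disp.1) (hy : (m' : ℤ) = (m : ℤ) - s.disp.2)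
    (l : List RStep) :
    l ++ [s] ∈ Gamma N 0 m ↔ l ∈ Gamma n' 0 m' := by
  rw [mem_gamma_concat, ← hx, ← hy]
  simp [Gamma, Set.mem_setOf_eq]

lemma Fstep_comp {s : RStep} {N m n' m' : ℕ}
    (hx : (n' : ℤ) = (N : ℤ) - s.disp.1) (hy : (m' : ℤ) = (m : ℤ) - s.disp.2)
    (l : List RStep) :
    Fstep a b lam c N m s (l ++ [s]) =
      stepWt a b lam c (m' : ℤ) s *
        Set.indicator (Gamma n' 0 m') (pathWt a b lam c 0) l := by
  rw [Fstep, if_pos (by simp)]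
  by_cases hmem : l ∈ Gamma n' 0 m'
  · rw [Set.indicator_of_mem ((concat_mem_iff hx hy l).mpr hmem), Set.indicator_of_mem hmem,
      pathWt_concat]
    have hend : ((l.map RStep.disp).sum).2 = (m' : ℤ) := by
      have := hmem.2
      rw [endPt_eq] at this
      simp only [Nat.cast_zero] at this
      have := congrArg Prod.snd this
      simpa using this
    rw [zero_add, hend, mul_comm]
  · rw [Set.indicator_of_notMem (fun hc => hmem ((concat_mem_iff hx hy l).mp hc)),
      Set.indicator_of_notMem hmem, mul_zero]

lemma Fstep_supp {s : RStep} {N m : ℕ} :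
    ∀ x ∉ Set.range (fun l : List RStep => l ++ [s]), Fstep a b lam c N m s x = 0 := by
  intro x hx
  rw [Fstep]
  by_cases hl : x.getLast? = some s
  · exfalso
    have hne : x ≠ [] := by rintro rfl; simp at hl
    have h2 : x.getLast hne = s := by
      have := List.getLast?_eq_getLast hne
      rw [hl] at this
      exact (Option.some_injective _ this.symm)
    exact hx ⟨x.dropLast, by rw [← h2]; exact List.dropLast_append_getLast hne⟩
  · rw [if_neg hl]

lemma concat_injective (s : RStep) :
    Function.Injective (fun l : List RStep => l ++ [s]) := fun x y h => by
  simpa using h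

lemma Fstep_summable (hsum : ∀ n m : ℕ, Summable fun p : Gamma n 0 m => pathWt a b lam c 0 p.1)
    {s : RStep} {N m n' m' : ℕ}
    (hx : (n' : ℤ) = (N : ℤ) - s.disp.1) (hy : (m' : ℤ) = (m : ℤ) - s.disp.2) :
    Summable (Fstep a b lam c N m s) := by
  rw [← Function.Injective.summable_iff (concat_injective s) (Fstep_supp a b lam c)]
  have : (Fstep a b lam c N m s) ∘ (fun l : List RStep => l ++ [s]) =
      fun l => stepWt a b lam c (m' : ℤ) s *
        Set.indicator (Gamma n' 0 m') (pathWt a b lam c 0) l := by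
    funext l
    exact Fstep_comp a b lam c hx hy l
  rw [this]
  exact (Summable.mul_left _ ((summable_subtype_iff_indicator).mp (hsum n' m')))

lemma Fstep_tsum (hsum : ∀ n m : ℕ, Summable fun p : Gamma n 0 m => pathWt a b lam c 0 p.1)
    {s : RStep} {N m n' m' : ℕ}
    (hx : (n' : ℤ) = (N : ℤ) - s.disp.1) (hy : (m' : ℤ) = (m : ℤ) - s.disp.2) :
    ∑' l : List RStep, Fstep a b lam c N m s l =
      stepWt a b lam c (m' : ℤ) s * mu a b lam c n' m' := by
  rw [← Function.Injective.tsum_eq (concat_injective s) (f := Fstep a b lam c N m s)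
    (by intro x hx'; by_contra hc; exact hx' (Fstep_supp a b lam c x hc))]
  calc ∑' l : List RStep, Fstep a b lam c N m s (l ++ [s])
      = ∑' l : List RStep, stepWt a b lam c (m' : ℤ) s *
          Set.indicator (Gamma n' 0 m') (pathWt a b lam c 0) l :=
        tsum_congr (Fstep_comp a b lam c hx hy)
    _ = stepWt a b lam c (m' : ℤ) s *
          ∑' l : List RStep, Set.indicator (Gamma n' 0 m') (pathWt a b lam c 0) l :=
        tsum_mul_left
    _ = _ := by rw [mu, tsum_subtype]

lemma Fstep_U_zero (N : ℕ) : Fstep a b lam c N 0 .U = 0 := by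
  funext l
  rw [Fstep]
  by_cases hl : l.getLast? = some .U
  · rw [if_pos hl]
    have hne : l ≠ [] := by rintro rfl; simp at hl
    have h2 : l.getLast hne = .U := by
      have := List.getLast?_eq_getLast hne
      rw [hl] at this
      exact (Option.some_injective _ this.symm)
    have hdec : l.dropLast ++ [RStep.U] = l := by
      rw [← h2]; exact List.dropLast_append_getLast hne
    apply Set.indicator_of_notMem
    rw [← hdec, mem_gamma_concat]
    rintro ⟨hh, he⟩
    have h3 := endHt_nonneg l.dropLast 0 le_rfl hh
    rw [endPt_eq] at he
    have := congrArg Prod.snd he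
    simp only [Prod.snd_add, Prod.snd_zero, zero_add, RStep.disp] at this
    omega
  · rw [if_neg hl]; rfl

end Mu
section MuRec

variable (a b lam c : ℕ → ℂ)

lemma nil_not_mem_gamma (n m : ℕ) : ([] : List RStep) ∉ Gamma (n+1) 0 m := by
  rintro ⟨-, he⟩
  have := congrArg Prod.fst he
  simp [endPt] at this
  omega

lemma mu_split (hsum : ∀ n m : ℕ, Summable fun p : Gamma n 0 m => pathWt a b lam c 0 p.1)
    (n m : ℕ) :
    mu a b lam c (n+1) m =
      (∑' l : List RStep, Fstep a b lam c (n+1) m .U l) +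
      (∑' l : List RStep, Fstep a b lam c (n+1) m .H l) +
      (∑' l : List RStep, Fstep a b lam c (n+1) m .D l) +
      (∑' l : List RStep, Fstep a b lam c (n+1) m .V l) +
      (∑' l : List RStep, Fstep a b lam c (n+1) m .B l) := by
  have hsplit : ∀ l : List RStep,
      Set.indicator (Gamma (n+1) 0 m) (pathWt a b lam c 0) l =
        Fstep a b lam c (n+1) m .U l + Fstep a b lam c (n+1) m .H l +
        Fstep a b lam c (n+1) m .D l + Fstep a b lam c (n+1) m .V l +
        Fstep a b lam c (n+1) m .B l := by
    intro l
    by_cases hne : l = []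
    · subst hne
      rw [Set.indicator_of_notMem (nil_not_mem_gamma n m)]
      simp [Fstep]
    · have hl : l.getLast? = some (l.getLast hne) := List.getLast?_eq_getLast hne
      cases hgl : l.getLast hne
      all_goals rw [hgl] at hl
      all_goals simp [Fstep, hl]
  have sU : Summable (Fstep a b lam c (n+1) m .U) := by
    cases m with
    | zero => rw [Fstep_U_zero]; exact summable_zero
    | succ k =>
      exact Fstep_summable a b lam c hsum (n' := n) (m' := k)
        (by simp [RStep.disp] <;> omega) (by simp [RStep.disp] <;> omega)
  have sH : Summable (Fstep a b lam c (n+1) m .H) :=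
    Fstep_summable a b lam c hsum (n' := n) (m' := m)
      (by simp [RStep.disp] <;> omega) (by simp [RStep.disp])
  have sD : Summable (Fstep a b lam c (n+1) m .D) :=
    Fstep_summable a b lam c hsum (n' := n) (m' := m+1)
      (by simp [RStep.disp] <;> omega) (by simp [RStep.disp] <;> omega)
  have sV : Summable (Fstep a b lam c (n+1) m .V) :=
    Fstep_summable a b lam c hsum (n' := n+1) (m' := m+1)
      (by simp [RStep.disp]) (by simp [RStep.disp] <;> omega)
  have sB : Summable (Fstep a b lam c (n+1) m .B) :=
    Fstep_summable a b lam c hsum (n' := n+2) (m' := m+1)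
      (by simp [RStep.disp] <;> omega) (by simp [RStep.disp] <;> omega)
  simp only [mu]
  rw [tsum_subtype, tsum_congr hsplit,
    Summable.tsum_add (((sU.add sH).add sD).add sV) sB,
    Summable.tsum_add ((sU.add sH).add sD) sV,
    Summable.tsum_add (sU.add sH) sD,
    Summable.tsum_add sU sH]

lemma mu_rec (hsum : ∀ n m : ℕ, Summable fun p : Gamma n 0 m => pathWt a b lam c 0 p.1)
    (n m : ℕ) :
    mu a b lam c (n+1) m =
      (if m = 0 then 0 else mu a b lam c n (m-1)) + b m * mu a b lam c n m +
        lam (m+1) * mu a b lam c n (m+1) + a (m+1) * mu a b lam c (n+1) (m+1) +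
        c (m+1) * mu a b lam c (n+2) (m+1) := by
  rw [mu_split a b lam c hsum n m]
  have tH : (∑' l : List RStep, Fstep a b lam c (n+1) m .H l) = b m * mu a b lam c n m := by
    rw [Fstep_tsum a b lam c hsum (n' := n) (m' := m)
      (by simp [RStep.disp] <;> omega) (by simp [RStep.disp])]
    simp [stepWt]
  have tD : (∑' l : List RStep, Fstep a b lam c (n+1) m .D l) =
      lam (m+1) * mu a b lam c n (m+1) := by
    rw [Fstep_tsum a b lam c hsum (n' := n) (m' := m+1)
      (by simp [RStep.disp] <;> omega) (by simp [RStep.disp] <;> omega)]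
    simp [stepWt]
  have tV : (∑' l : List RStep, Fstep a b lam c (n+1) m .V l) =
      a (m+1) * mu a b lam c (n+1) (m+1) := by
    rw [Fstep_tsum a b lam c hsum (n' := n+1) (m' := m+1)
      (by simp [RStep.disp]) (by simp [RStep.disp] <;> omega)]
    simp [stepWt]
  have tB : (∑' l : List RStep, Fstep a b lam c (n+1) m .B l) =
      c (m+1) * mu a b lam c (n+2) (m+1) := by
    rw [Fstep_tsum a b lam c hsum (n' := n+2) (m' := m+1)
      (by simp [RStep.disp] <;> omega) (by simp [RStep.disp] <;> omega)]
    simp [stepWt]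
  have tU : (∑' l : List RStep, Fstep a b lam c (n+1) m .U l) =
      (if m = 0 then 0 else mu a b lam c n (m-1)) := by
    cases m with
    | zero => rw [Fstep_U_zero]; simp
    | succ k =>
      rw [Fstep_tsum a b lam c hsum (n' := n) (m' := k)
        (by simp [RStep.disp] <;> omega) (by simp [RStep.disp] <;> omega)]
      simp [stepWt]
  rw [tU, tH, tD, tV, tB]

end MuRec
section Alg

variable (a b lam c : ℕ → ℂ)

/-- The quadratic `c_i x² + a_i x + λ_i`. -/
noncomputable def qp (i : ℕ) : Polynomial ℂ :=
  C (c i) * X ^ 2 + C (a i) * X + C (lam i)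

lemma qp_ne_zero {i : ℕ} (hc : c i ≠ 0) : qp a lam c i ≠ 0 := by
  intro h
  have := congrArg (fun p => Polynomial.coeff p 2) h
  simp [qp, coeff_X_pow, coeff_C] at this
  exact hc this

lemma dpoly_succ (m : ℕ) :
    dpoly a lam c (m+1) = dpoly a lam c m * qp a lam c (m+1) := by
  rw [dpoly, Finset.prod_range_succ, dpoly, qp]

lemma dpoly_ne_zero (hc : ∀ i, 1 ≤ i → c i ≠ 0) (m : ℕ) : dpoly a lam c m ≠ 0 := by
  induction m with
  | zero => simp [dpoly]
  | succ k ih =>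
    rw [dpoly_succ]
    exact mul_ne_zero ih (qp_ne_zero a lam c (hc _ (by omega)))

lemma Qfun_zero : Qfun a b lam c 0 = 1 := by
  simp [Qfun, Ppoly, dpoly]

end Alg
section Key

variable (a b lam c : ℕ → ℂ)

local notation "alg" => algebraMap (Polynomial ℂ) (RatFunc ℂ)

lemma alg_ne_zero {p : Polynomial ℂ} (hp : p ≠ 0) : (alg p : RatFunc ℂ) ≠ 0 := by
  simpa using (map_ne_zero_iff _ (RatFunc.algebraMap_injective ℂ)).mpr hp

lemma key0 (hc : ∀ i, 1 ≤ i → c i ≠ 0) :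
    RatFunc.X * Qfun a b lam c 0 =
      alg (C (b 0)) * Qfun a b lam c 0 + alg (C (lam 1)) * Qfun a b lam c 1 +
        alg (C (a 1)) * (RatFunc.X * Qfun a b lam c 1) +
        alg (C (c 1)) * (RatFunc.X ^ 2 * Qfun a b lam c 1) := by
  have h1 : (alg (qp a lam c 1) : RatFunc ℂ) ≠ 0 :=
    alg_ne_zero (qp_ne_zero a lam c (hc 1 le_rfl))
  rw [Qfun_zero]
  have hd1 : dpoly a lam c 1 = qp a lam c 1 := by
    rw [show (1:ℕ) = 0 + 1 from rfl, dpoly_succ]; simp [dpoly]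
  rw [Qfun, hd1, ← RatFunc.algebraMap_X]
  have hP1 : Ppoly a b lam c 1 = X - C (b 0) := rfl
  rw [hP1]
  field_simp
  simp only [← RatFunc.algebraMap_C, ← RatFunc.algebraMap_X, ← map_mul, ← map_pow, ← map_add,
    ← map_sub]
  rw [(RatFunc.algebraMap_injective ℂ).eq_iff]
  rw [qp]
  ring

lemma keyS (hc : ∀ i, 1 ≤ i → c i ≠ 0) (m : ℕ) :
    RatFunc.X * Qfun a b lam c (m+1) =
      alg (C (b (m+1))) * Qfun a b lam c (m+1) + Qfun a b lam c m +
        alg (C (lam (m+2))) * Qfun a b lam c (m+2) +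
        alg (C (a (m+2))) * (RatFunc.X * Qfun a b lam c (m+2)) +
        alg (C (c (m+2))) * (RatFunc.X ^ 2 * Qfun a b lam c (m+2)) := by
  have hq1 : (alg (qp a lam c (m+1)) : RatFunc ℂ) ≠ 0 :=
    alg_ne_zero (qp_ne_zero a lam c (hc _ (by omega)))
  have hq2 : (alg (qp a lam c (m+2)) : RatFunc ℂ) ≠ 0 :=
    alg_ne_zero (qp_ne_zero a lam c (hc _ (by omega)))
  have hrec : Ppoly a b lam c (m+2) =
      (X - C (b (m+1))) * Ppoly a b lam c (m+1) - qp a lam c (m+1) * Ppoly a b lam c m := by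
    simp only [qp]; rfl
  have hd2a : dpoly a lam c (m+2) = dpoly a lam c (m+1) * qp a lam c (m+2) :=
    dpoly_succ a lam c (m+1)
  have hd2b : dpoly a lam c (m+2) = dpoly a lam c m * qp a lam c (m+1) * qp a lam c (m+2) := by
    rw [hd2a, dpoly_succ a lam c m]
  have e1 : Qfun a b lam c (m+1) =
      alg (Ppoly a b lam c (m+1) * qp a lam c (m+2)) / alg (dpoly a lam c (m+2)) := by
    rw [Qfun, hd2a, map_mul, map_mul]
    exact (mul_div_mul_right _ _ hq2).symm
  have e2 : Qfun a b lam c m =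
      alg (Ppoly a b lam c m * qp a lam c (m+1) * qp a lam c (m+2)) /
        alg (dpoly a lam c (m+2)) := by
    rw [Qfun, hd2b, map_mul, map_mul, map_mul, map_mul]
    exact ((mul_div_mul_right _ _ hq2).trans (mul_div_mul_right _ _ hq1)).symm
  have e3 : Qfun a b lam c (m+2) =
      alg (Ppoly a b lam c (m+2)) / alg (dpoly a lam c (m+2)) := rfl
  rw [e1, e2, e3, ← RatFunc.algebraMap_X]
  simp only [← mul_div_assoc, ← add_div]
  congr 1
  simp only [← map_pow, ← map_mul, ← map_add]
  rw [(RatFunc.algebraMap_injective ℂ).eq_iff]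
  rw [hrec]
  simp only [qp]
  ring

end Key
section ElLayer

variable (a b lam c : ℕ → ℂ)

local notation "alg" => algebraMap (Polynomial ℂ) (RatFunc ℂ)

/-- The element `x^n Q_m` of `W`. -/
noncomputable def el (n m : ℕ) : Wspace a b lam c :=
  ⟨RatFunc.X ^ n * Qfun a b lam c m, Submodule.subset_span ⟨n, m, rfl⟩⟩

lemma el_coe (n m : ℕ) :
    (el a b lam c n m : RatFunc ℂ) = RatFunc.X ^ n * Qfun a b lam c m := rfl

lemma smul_ratfunc (z : ℂ) (f : RatFunc ℂ) : z • f = alg (C z) * f := by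
  rw [Algebra.smul_def, IsScalarTower.algebraMap_apply ℂ (Polynomial ℂ) (RatFunc ℂ),
    Polynomial.algebraMap_eq]

lemma mu_empty {n m : ℕ} (h : n < m) : mu a b lam c n m = 0 := by
  haveI := gamma_empty (n := n) (m := m) h
  exact tsum_empty

lemma elrec0 (hc : ∀ i, 1 ≤ i → c i ≠ 0) (n : ℕ) :
    el a b lam c (n+1) 0 =
      b 0 • el a b lam c n 0 + lam 1 • el a b lam c n 1 +
        a 1 • el a b lam c (n+1) 1 + c 1 • el a b lam c (n+2) 1 := by
  apply Subtype.ext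
  push_cast [el_coe, smul_ratfunc]
  have hk := key0 a b lam c hc
  calc RatFunc.X ^ (n+1) * Qfun a b lam c 0
      = RatFunc.X ^ n * (RatFunc.X * Qfun a b lam c 0) := by ring
    _ = RatFunc.X ^ n * (alg (C (b 0)) * Qfun a b lam c 0 + alg (C (lam 1)) * Qfun a b lam c 1 +
          alg (C (a 1)) * (RatFunc.X * Qfun a b lam c 1) +
          alg (C (c 1)) * (RatFunc.X ^ 2 * Qfun a b lam c 1)) := by rw [hk]
    _ = _ := by ring

lemma elrecS (hc : ∀ i, 1 ≤ i → c i ≠ 0) (n m : ℕ) :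
    el a b lam c (n+1) (m+1) =
      el a b lam c n m + b (m+1) • el a b lam c n (m+1) +
        lam (m+2) • el a b lam c n (m+2) + a (m+2) • el a b lam c (n+1) (m+2) +
        c (m+2) • el a b lam c (n+2) (m+2) := by
  apply Subtype.ext
  push_cast [el_coe, smul_ratfunc]
  have hk := keyS a b lam c hc m
  calc RatFunc.X ^ (n+1) * Qfun a b lam c (m+1)
      = RatFunc.X ^ n * (RatFunc.X * Qfun a b lam c (m+1)) := by ring
    _ = RatFunc.X ^ n * (alg (C (b (m+1))) * Qfun a b lam c (m+1) + Qfun a b lam c m +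
          alg (C (lam (m+2))) * Qfun a b lam c (m+2) +
          alg (C (a (m+2))) * (RatFunc.X * Qfun a b lam c (m+2)) +
          alg (C (c (m+2))) * (RatFunc.X ^ 2 * Qfun a b lam c (m+2))) := by rw [hk]
    _ = _ := by ring

end ElLayer


/-- Let the sequences satisfy the type `R_II` conditions and suppose the weight families
over `Γ_{n,0,m}` are summable. If `ℒ : W → ℂ` is ℂ-linear with `ℒ(x^n) = Σ_{p∈Γ_n} wt(p)`,
`ℒ(Q_n) = 0` and `ℒ(x Q_{n+1}) = 0` for `n ≥ 1`, and `ℒ(x Q_1) = Σ_{p∈Γ_{1,1}} wt(p)`,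
then `ℒ(x^n Q_m) = Σ_{p∈Γ_{n,m}} wt(p)` for all `n, m ≥ 0`. -/
theorem stmt3 (a b lam c : ℕ → ℂ) (hR : RIIConds a b lam c)
    (hsum : ∀ n m : ℕ, Summable fun p : Gamma n 0 m => pathWt a b lam c 0 p.1)
    (ℒ : Wspace a b lam c →ₗ[ℂ] ℂ)
    (h1 : ∀ (n : ℕ) (f : Wspace a b lam c), (f : RatFunc ℂ) = RatFunc.X ^ n →
      ℒ f = ∑' p : Gamma n 0 0, pathWt a b lam c 0 p.1)
    (h2 : ∀ (n : ℕ), 1 ≤ n → ∀ f : Wspace a b lam c, (f : RatFunc ℂ) = Qfun a b lam c n →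
      ℒ f = 0)
    (h3 : ∀ (n : ℕ), 1 ≤ n → ∀ f : Wspace a b lam c,
      (f : RatFunc ℂ) = RatFunc.X * Qfun a b lam c (n + 1) → ℒ f = 0)
    (h4 : ∀ f : Wspace a b lam c, (f : RatFunc ℂ) = RatFunc.X * Qfun a b lam c 1 →
      ℒ f = ∑' p : Gamma 1 0 1, pathWt a b lam c 0 p.1) :
    ∀ (n m : ℕ) (f : Wspace a b lam c),
      (f : RatFunc ℂ) = RatFunc.X ^ n * Qfun a b lam c m →
      ℒ f = ∑' p : Gamma n 0 m, pathWt a b lam c 0 p.1 := by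
  have hc : ∀ i, 1 ≤ i → c i ≠ 0 := fun i hi => (hR i hi).1
  have Lrec : ∀ n m : ℕ, ℒ (el a b lam c (n+1) m) =
      (if m = 0 then 0 else ℒ (el a b lam c n (m-1))) + b m * ℒ (el a b lam c n m) +
        lam (m+1) * ℒ (el a b lam c n (m+1)) + a (m+1) * ℒ (el a b lam c (n+1) (m+1)) +
        c (m+1) * ℒ (el a b lam c (n+2) (m+1)) := by
    intro n m
    cases m with
    | zero =>
      rw [if_pos rfl, elrec0 a b lam c hc n]
      simp only [map_add, map_smul, smul_eq_mul]
      try ring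
    | succ j =>
      rw [if_neg (Nat.succ_ne_zero j), elrecS a b lam c hc n j]
      simp only [map_add, map_smul, smul_eq_mul, Nat.succ_sub_one]
      try ring
  have L0 : ∀ n, ℒ (el a b lam c n 0) = mu a b lam c n 0 := by
    intro n
    rw [h1 n _ (by rw [el_coe, Qfun_zero, mul_one])]
    rfl
  have step : ∀ m : ℕ, (∀ n, ℒ (el a b lam c n m) = mu a b lam c n m) →
      (∀ n, (if m = 0 then (0:ℂ) else ℒ (el a b lam c n (m-1))) =
        (if m = 0 then 0 else mu a b lam c n (m-1))) →
      ∀ n, ℒ (el a b lam c n (m+1)) = mu a b lam c n (m+1) := by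
    intro m Hm Hu n
    induction n using Nat.strong_induction_on with
    | _ n ih =>
      rcases n with _ | _ | k
      · rw [h2 (m+1) (by omega) _ (by rw [el_coe, pow_zero, one_mul]),
          mu_empty a b lam c (by omega)]
      · cases m with
        | zero => exact (h4 _ (by rw [el_coe, pow_one])).trans rfl
        | succ j =>
          rw [h3 (j+1) (by omega) _ (by rw [el_coe, pow_one]),
            mu_empty a b lam c (by omega)]
      · have e := Lrec k m
        rw [Hm (k+1), Hm k, Hu k, ih k (by omega), ih (k+1) (by omega)] at e
        have e2 := mu_rec a b lam c hsum k m
        refine mul_left_cancel₀ (hc (m+1) (by omega)) ?_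
        linear_combination e2 - e
  have main : ∀ m : ℕ, (∀ n, ℒ (el a b lam c n m) = mu a b lam c n m) ∧
      (∀ n, ℒ (el a b lam c n (m+1)) = mu a b lam c n (m+1)) := by
    intro m
    induction m with
    | zero =>
      refine ⟨L0, step 0 L0 ?_⟩
      intro n; simp
    | succ k ih =>
      refine ⟨ih.2, step (k+1) ih.2 ?_⟩
      intro n
      rw [if_neg (Nat.succ_ne_zero k), if_neg (Nat.succ_ne_zero k)]
      exact ih.1 n
  intro n m f hf
  have hfe : f = el a b lam c n m := Subtype.ext (by rw [hf, el_coe])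
  rw [hfe]
  exact (main m).1 n
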